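/- Let A₁, A₂, A₃ be the 5×5 complex matrices obtained from ρ_τ by setting (τ₁,τ₂,τ₃) equal to (1,0,0), (0,1,0), (0,0,1) respectively. Then their commutators satisfy the so(3) relations: [A₁, A₂] = A₃, [A₂, A₃] = A₁, and [A₃, A₁] = A₂, where [A,B] = AB − BA. Hence A₁, A₂, A₃ span a Lie algebra isomorphic to so(3) inside the 5×5 complex matrices. -/

import Mathlib

open Complex Matrix BigOperators Finset

noncomputable section

/-- The primitive cube root of unity `q = exp(2πi/3)`. -/
def q : ℂ := Complex.exp (2 * Real.pi * Complex.I / 3)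

/-- A rank-3 tensor in 3-dimensional space. -/
abbrev Tensor3 := Fin 3 → Fin 3 → Fin 3 → ℂ

/-- Condition T1: every trace of the tensor vanishes. -/
def CondT1 (T : Tensor3) : Prop :=
  ∀ j : Fin 3, (∑ i, T i i j = 0) ∧ (∑ i, T i j i = 0) ∧ (∑ i, T j i i = 0)

/-- Condition T2: all cyclic sums vanish. -/
def CondT2 (T : Tensor3) : Prop :=
  ∀ i j k : Fin 3, T i j k + T j k i + T k i j = 0

/-- The cyclic permutation operator `Φ_σ` on rank-3 tensors. -/
def Phi (T : Tensor3) : Tensor3 := fun i j k => T j k i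

/-- Action of a real 3×3 matrix on a rank-3 tensor. -/
def gact (g : Matrix (Fin 3) (Fin 3) ℝ) (T : Tensor3) : Tensor3 :=
  fun i j k => ∑ p, ∑ r, ∑ s, (g i p : ℂ) * (g j r : ℂ) * (g k s : ℂ) * T p r s

/-- The tensor `T(z)` associated with a point `z ∈ ℂ⁵`. -/
def Tz (z : Fin 5 → ℂ) : Tensor3 :=
  ![![![0, -(star q) * z 1 / (Real.sqrt 6 : ℂ), (star q) * z 2 / (Real.sqrt 6 : ℂ)],
     ![-q * z 1 / (Real.sqrt 6 : ℂ), z 0 / (Real.sqrt 6 : ℂ), z 3 / (Real.sqrt 3 : ℂ)],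
     ![q * z 2 / (Real.sqrt 6 : ℂ), q * z 4 / (Real.sqrt 3 : ℂ), -(z 0) / (Real.sqrt 6 : ℂ)]],
    ![![-(z 1) / (Real.sqrt 6 : ℂ), q * z 0 / (Real.sqrt 6 : ℂ), (star q) * z 4 / (Real.sqrt 3 : ℂ)],
     ![(star q) * z 0 / (Real.sqrt 6 : ℂ), 0, -(star q) * z 2 / (Real.sqrt 6 : ℂ)],
     ![(star q) * z 3 / (Real.sqrt 3 : ℂ), -q * z 2 / (Real.sqrt 6 : ℂ), z 1 / (Real.sqrt 6 : ℂ)]],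
    ![![z 2 / (Real.sqrt 6 : ℂ), q * z 3 / (Real.sqrt 3 : ℂ), -q * z 0 / (Real.sqrt 6 : ℂ)],
     ![z 4 / (Real.sqrt 3 : ℂ), -(z 2) / (Real.sqrt 6 : ℂ), q * z 1 / (Real.sqrt 6 : ℂ)],
     ![-(star q) * z 0 / (Real.sqrt 6 : ℂ), (star q) * z 1 / (Real.sqrt 6 : ℂ), 0]]]

/-- The matrix `K` of the invariant quadratic form
`K(z,z) = (z¹)² + (z²)² + (z³)² + 2q z⁴ z⁵`. -/
def Kmat : Matrix (Fin 5) (Fin 5) ℂ :=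
  !![1, 0, 0, 0, 0;
     0, 1, 0, 0, 0;
     0, 0, 1, 0, 0;
     0, 0, 0, 0, q;
     0, 0, 0, q, 0]

/-- The matrix `ρ_τ` of the infinitesimal action of `so(3)` on `ℂ⁵`. -/
def rho (τ₁ τ₂ τ₃ : ℝ) : Matrix (Fin 5) (Fin 5) ℂ :=
  !![0, (τ₃ : ℂ), -(τ₂ : ℂ), -(Real.sqrt 2 : ℂ) * τ₁, -(Real.sqrt 2 : ℂ) * q * τ₁;
     -(τ₃ : ℂ), 0, (τ₁ : ℂ), -(Real.sqrt 2 : ℂ) * (star q) * τ₂, -(Real.sqrt 2 : ℂ) * (star q) * τ₂;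
     (τ₂ : ℂ), -(τ₁ : ℂ), 0, -(Real.sqrt 2 : ℂ) * q * τ₃, -(Real.sqrt 2 : ℂ) * τ₃;
     (Real.sqrt 2 : ℂ) * τ₁, (Real.sqrt 2 : ℂ) * q * τ₂, (Real.sqrt 2 : ℂ) * (star q) * τ₃, 0, 0;
     (Real.sqrt 2 : ℂ) * (star q) * τ₁, (Real.sqrt 2 : ℂ) * q * τ₂, (Real.sqrt 2 : ℂ) * τ₃, 0, 0]

/-! Every entry of the three identities is a polynomial identity in `√2`, `q` and `q̄`. Since `q` is
a primitive cube root of unity on the unit circle, `q̄ = q⁻¹ = q²`, and each entry then follows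
from `√2 · √2 = 2` and `q² + q + 1 = 0`. -/

open ComplexConjugate

lemma q_isPrimitiveRoot : IsPrimitiveRoot q 3 := by
  simpa [q] using Complex.isPrimitiveRoot_exp 3 (by norm_num)

lemma q_sq_add_q_add_one : q ^ 2 + q + 1 = 0 := by
  have h := q_isPrimitiveRoot.geom_sum_eq_zero (by norm_num)
  simp only [Finset.sum_range_succ, Finset.sum_range_zero, pow_zero, pow_one, zero_add] at h
  linear_combination h

lemma conj_q : conj q = q ^ 2 := by
  have hq : q * conj q = 1 := by
    rw [Complex.mul_conj, Complex.normSq_eq_norm_sq, q_isPrimitiveRoot.norm'_eq_one (by norm_num)]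
    norm_num
  linear_combination q ^ 2 * hq - conj q * q_isPrimitiveRoot.pow_eq_one

lemma ofReal_sqrt_two_mul_self : (Real.sqrt 2 : ℂ) * Real.sqrt 2 = 2 := by
  rw [← Complex.ofReal_mul, Real.mul_self_sqrt zero_le_two, Complex.ofReal_ofNat]

/-- The matrices `A₁ = ρ_{(1,0,0)}`, `A₂ = ρ_{(0,1,0)}`,
`A₃ = ρ_{(0,0,1)}` satisfy the `so(3)` commutation relations. -/
theorem rho_so3_commutation_relations :
    rho 1 0 0 * rho 0 1 0 - rho 0 1 0 * rho 1 0 0 = rho 0 0 1 ∧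
    rho 0 1 0 * rho 0 0 1 - rho 0 0 1 * rho 0 1 0 = rho 1 0 0 ∧
    rho 0 0 1 * rho 1 0 0 - rho 1 0 0 * rho 0 0 1 = rho 0 1 0 := by
  refine ⟨?_, ?_, ?_⟩ <;>
  · simp [rho, funext_iff, Fin.forall_fin_succ, conj_q]
    grind [q_sq_add_q_add_one, ofReal_sqrt_two_mul_self]

end
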